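/- For the dihedral group I₂(m) realized on ℝ² (or ℂ²) with basic invariants U₁ = p₁²+p₂² and U₂ the real part of (p₁+ip₂)^m (suitably normalized), the one-parameter family of flat coordinates u₁ = U₁, u₂ = U₂ + c·U₁^{m/2} yields, for B₂ (m=4), the vector potential A¹ = -(2c/3 + 1/2)u₁³ + u₁u₂, A² = -(c²/3 + c/2 + 1)u₁⁴ + (1/2)u₂², which satisfies the oriented associativity equations with unit ∂/∂u₂ and homogeneity E(A^i) = (1+w_i)A^i for E = (1/4)(2u₁∂₁ + 4u₂∂₂) with w₁ = 1/2, w₂ = 1. -/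

import Mathlib

/-!
Since `∂₂A^i = u_i`, symmetry of second derivatives gives `∂₂∂_i A^j = ∂_i u_j = δ^j_i`, so `∂₂`
is the unit of the multiplication with structure constants `cⁱ_{jk}`. In dimension two a unit
alone forces associativity: every pair of distinct directions contains the unit direction, and
multiplying by the unit on either side does nothing. Homogeneity is a direct computation.
-/

open scoped BigOperators

/-- Partial derivative in the `i`-th coordinate direction on `ℂⁿ`. -/
noncomputable def pd {n : ℕ} (i : Fin n) (f : (Fin n → ℂ) → ℂ) (p : Fin n → ℂ) : ℂ :=
  fderiv ℂ f p (Pi.single i 1)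

/-- Second partial derivative `∂_i ∂_j f`. -/
noncomputable def sd {n : ℕ} (i j : Fin n) (f : (Fin n → ℂ) → ℂ) (p : Fin n → ℂ) : ℂ :=
  pd i (pd j f) p

/-- The one-parameter family (parameter `c`) of vector potentials for the dihedral group
`B₂ = I₂(4)` in the flat coordinates `u₁ = U₁ = p₁²+p₂²`, `u₂ = U₂ + cU₁²`
(`U₂ = p₁⁴+p₂⁴`):  `A¹ = -(2c/3 + 1/2)u₁³ + u₁u₂`, `A² = -(c²/3 + c/2 + 1)u₁⁴ + ½u₂²`. -/
noncomputable def AB2 (c : ℂ) : Fin 2 → (Fin 2 → ℂ) → ℂ :=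
  ![fun p => -(2*c/3 + 1/2) * (p 0)^3 + p 0 * p 1,
    fun p => -(c^2/3 + c/2 + 1) * (p 0)^4 + (1/2) * (p 1)^2]

/-- Structure constants `cⁱ_{jk} = ∂_j∂_k A^i` of the `B₂` family. -/
noncomputable def cB2 (c : ℂ) (i j k : Fin 2) (p : Fin 2 → ℂ) : ℂ := sd j k (AB2 c i) p

open scoped ContDiff

section StructureConstants

variable {ι R : Type*} [Fintype ι] [DecidableEq ι] [Semiring R] {C : ι → ι → ι → R} {e : ι}

theorem sum_unit_mul (hC : ∀ i k, C i e k = if k = i then 1 else 0) (i j m : ι) :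
    ∑ l, C i e l * C l j m = C i j m := by
  simp [hC]

theorem sum_mul_unit (hC : ∀ i k, C i e k = if k = i then 1 else 0) (i j m : ι) :
    ∑ l, C i j l * C l e m = C i j m := by
  simp [hC]

theorem assoc_of_unit_fin_two {C : Fin 2 → Fin 2 → Fin 2 → R}
    (hC : ∀ i k, C i 1 k = if k = i then 1 else 0) (i j k m : Fin 2) :
    ∑ l, C i j l * C l k m = ∑ l, C i k l * C l j m := by
  fin_cases j <;> fin_cases k <;> simp [sum_unit_mul hC, sum_mul_unit hC]

end StructureConstants

section PartialDerivatives

variable {n : ℕ} {f : (Fin n → ℂ) → ℂ} {p : Fin n → ℂ}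

theorem pd_coord (i j : Fin n) : pd i (fun q => q j) p = if i = j then 1 else 0 := by
  simp [pd, fderiv_apply, Pi.single_apply, eq_comm]

theorem sd_eq_fderiv_fderiv (hf : DifferentiableAt ℂ (fderiv ℂ f) p) (i j : Fin n) :
    sd i j f p = fderiv ℂ (fderiv ℂ f) p (Pi.single i 1) (Pi.single j 1) := by
  change fderiv ℂ (fun q => fderiv ℂ f q (Pi.single j 1)) p (Pi.single i 1) = _
  rw [fderiv_clm_apply hf (differentiableAt_const _)]
  simp

theorem sd_comm (hf : ContDiffAt ℂ ω f p) (i j : Fin n) : sd i j f p = sd j i f p := by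
  have hf' : DifferentiableAt ℂ (fderiv ℂ f) p :=
    (hf.fderiv_right (m := 1) le_top).differentiableAt one_ne_zero
  rw [sd_eq_fderiv_fderiv hf', sd_eq_fderiv_fderiv hf', hf.isSymmSndFDerivAt_of_omega.eq]

end PartialDerivatives

section B2

variable (c : ℂ)

theorem contDiff_AB2 (i : Fin 2) : ContDiff ℂ ω (AB2 c i) := by
  fin_cases i <;> simp [AB2] <;> fun_prop

theorem pd_one_AB2 (i : Fin 2) : pd 1 (AB2 c i) = fun p => p i := by
  funext p
  fin_cases i
  · simp (disch := fun_prop) [AB2, pd, fderiv_fun_add, fderiv_const_mul, fderiv_fun_pow,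
      fderiv_fun_mul, fderiv_apply, Pi.single_apply]
  · simp (disch := fun_prop) [AB2, pd, fderiv_fun_add, fderiv_const_mul, fderiv_fun_pow,
      fderiv_apply, Pi.single_apply]
    ring

theorem cB2_unit (p : Fin 2 → ℂ) (i j : Fin 2) : cB2 c j 1 i p = if i = j then 1 else 0 := by
  rw [cB2, sd_comm (contDiff_AB2 c j).contDiffAt, sd, pd_one_AB2, pd_coord]

theorem AB2_euler (p : Fin 2 → ℂ) (i : Fin 2) :
    (1/2) * p 0 * pd 0 (AB2 c i) p + p 1 * pd 1 (AB2 c i) p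
      = (1 + (![1/2, 1] : Fin 2 → ℂ) i) * AB2 c i p := by
  fin_cases i <;>
    simp (disch := fun_prop) [AB2, pd, fderiv_fun_add, fderiv_const_mul, fderiv_fun_pow,
      fderiv_fun_mul, fderiv_apply, Pi.single_apply] <;> ring

end B2

/-- For every value of the parameter `c`, the `B₂` vector potential
`A¹ = -(2c/3+1/2)u₁³ + u₁u₂`, `A² = -(c²/3+c/2+1)u₁⁴ + ½u₂²` satisfies the oriented
associativity equations with unit `∂/∂u₂` and the homogeneity condition
`E(A^i) = (1+w_i)A^i` for the normalized Euler field `E = (1/4)(2u₁∂₁ + 4u₂∂₂)`, with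
weights `w₁ = 1/2`, `w₂ = 1`. -/
theorem B2_family_potential (c : ℂ) :
    -- oriented associativity
    (∀ (p : Fin 2 → ℂ) (i j k m : Fin 2),
      (∑ l, cB2 c i j l p * cB2 c l k m p) = ∑ l, cB2 c i k l p * cB2 c l j m p) ∧
    -- e = ∂/∂u₂ is the unit: ∂₂∂_i A^j = δ^j_i
    (∀ (p : Fin 2 → ℂ) (i j : Fin 2),
      cB2 c j 1 i p = if i = j then (1 : ℂ) else 0) ∧
    -- homogeneity E(A^i) = (1+w_i)A^i with E = (1/2)u₁∂₁ + u₂∂₂ and w = (1/2, 1)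
    (∀ (p : Fin 2 → ℂ) (i : Fin 2),
      (1/2) * p 0 * pd 0 (AB2 c i) p + p 1 * pd 1 (AB2 c i) p
        = (1 + (![1/2, 1] : Fin 2 → ℂ) i) * AB2 c i p) :=
  ⟨fun p => assoc_of_unit_fin_two (C := fun i j k => cB2 c i j k p) fun i k => cB2_unit c p k i,
    cB2_unit c, AB2_euler c⟩
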